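/- arXiv:1507.00303 — 3 statements merged into one kernel-verified Lean document; each statement's English description precedes it below -/
import Mathlib

section
/- (Hayashi's pinching inequality) Let H be a self-adjoint operator on a finite-dimensional Hilbert space whose spectral decomposition has L distinct eigenvalues with projectors P_1,...,P_L. Then for every positive semidefinite operator X, the operator inequality P_H(X) ≥ X / L holds, where P_H(X) = Σ_x P_x X P_x. -/
/-!
As `∑ x, P x = 1`, summing the conjugations `(P x - P y) * X * (P x - P y)ᴴ` over all pairs
`(x, y)` gives `2 • (L • ∑ x, P x * X * P x - X)`, a sum of positive semidefinite matrices.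
-/

open scoped ComplexOrder

/-- the pinching map associated to a family of projectors. -/
noncomputable def pinch {A ι : Type*} [Fintype A] [DecidableEq A] [Fintype ι] (P : ι → Matrix A A ℂ)
    (X : Matrix A A ℂ) : Matrix A A ℂ :=
  ∑ x, P x * X * P x

open Finset Matrix

theorem sum_sum_sub_mul_mul_star_sub {R ι : Type*} [NonUnitalRing R] [StarRing R] [Fintype ι]
    (a : ι → R) (X : R) :
    ∑ x, ∑ y, (a x - a y) * X * star (a x - a y) =
      2 • (Fintype.card ι • ∑ x, a x * X * star (a x) - (∑ x, a x) * X * star (∑ x, a x)) := by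
  simp only [star_sub, star_sum, sub_mul, mul_sub, sum_sub_distrib, sum_mul, mul_sum, sum_const,
    card_univ, smul_sub, two_nsmul]
  rw [← smul_sum, sum_comm (f := fun x y => a x * X * star (a y))]
  abel

theorem Matrix.PosSemidef.card_smul_sum_conj_sub_conj_sum {𝕜 n ι : Type*} [RCLike 𝕜]
    [Fintype n] [Fintype ι] {X : Matrix n n 𝕜} (hX : X.PosSemidef)
    (P : ι → Matrix n n 𝕜) :
    (Fintype.card ι • ∑ x, P x * X * (P x)ᴴ - (∑ x, P x) * X * (∑ x, P x)ᴴ).PosSemidef := by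
  have h := posSemidef_sum univ fun x _ => posSemidef_sum univ fun y _ =>
    hX.mul_mul_conjTranspose_same (P x - P y)
  simp only [← star_eq_conjTranspose] at h ⊢
  rw [sum_sum_sub_mul_mul_star_sub, ← Nat.cast_smul_eq_nsmul ℝ] at h
  simpa [smul_smul] using h.smul (a := (2⁻¹ : ℝ)) (by norm_num)

theorem pinching_inequality_general
    {A ι : Type*} [Fintype A] [DecidableEq A] [Fintype ι]
    (P : ι → Matrix A A ℂ)
    (hHerm : ∀ x, (P x).IsHermitian)
    (hsum : ∑ x, P x = 1)
    (X : Matrix A A ℂ) (hX : X.PosSemidef) :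
    (pinch P X - ((Fintype.card ι : ℂ))⁻¹ • X).PosSemidef := by
  rcases isEmpty_or_nonempty ι with hι | hι
  · simpa [pinch] using PosSemidef.zero
  have key := hX.card_smul_sum_conj_sub_conj_sum P
  simp only [hsum, conjTranspose_one, one_mul, mul_one, (hHerm _).eq] at key
  have hL : (Fintype.card ι : ℂ) ≠ 0 := Nat.cast_ne_zero.mpr Fintype.card_ne_zero
  have hscale : pinch P X - (Fintype.card ι : ℂ)⁻¹ • X =
      (Fintype.card ι : ℂ)⁻¹ • (Fintype.card ι • pinch P X - X) := by
    rw [smul_sub, ← Nat.cast_smul_eq_nsmul ℂ, smul_smul, inv_mul_cancel₀ hL, one_smul]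
  rw [hscale, pinch]
  exact key.smul (inv_nonneg.mpr (Nat.cast_nonneg _))

/-- **Hayashi's pinching inequality.** If `H = ∑ x, μ x • P x` is the spectral decomposition
of a self-adjoint operator into `L` distinct eigenvalues (`L = Fintype.card ι`), then for
every positive semidefinite `X` one has `P_H(X) ≥ X / L` in the Loewner order. -/
theorem pinching_inequality
    {A ι : Type*} [Fintype A] [DecidableEq A] [Fintype ι] [DecidableEq ι]
    (P : ι → Matrix A A ℂ) (μ : ι → ℝ) (H : Matrix A A ℂ)
    (hHerm : ∀ x, (P x).IsHermitian)
    (horth : ∀ x y, P x * P y = if x = y then P x else 0)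
    (hsum : ∑ x, P x = 1)
    (hμ : Function.Injective μ)
    (hH : H = ∑ x, (μ x : ℂ) • P x)
    (X : Matrix A A ℂ) (hX : X.PosSemidef) :
    (pinch P X - ((Fintype.card ι : ℂ))⁻¹ • X).PosSemidef :=
  pinching_inequality_general P hHerm hsum X hX
end

section
/- For discrete phases: given orthogonal projectors P_1,...,P_d summing to the identity and any operator X on the n-fold tensor power, averaging (U^φ)^{⊗n} X ((U^φ)^†)^{⊗n} over φ ranging over the finite group {2πj/(n+1) : j=0,...,n}^d of phase vectors yields the type-pinching Σ_μ P_μ^n X P_μ^n. -/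
open scoped ComplexOrder Matrix

/-- the phase unitary `∑ k, e^{i φ k} • P k` built from a projector family. -/
noncomputable def phaseUnitary {A ι : Type*} [Fintype A] [Fintype ι]
    (P : ι → Matrix A A ℂ) (φ : ι → ℝ) : Matrix A A ℂ :=
  ∑ k, Complex.exp ((φ k : ℂ) * Complex.I) • P k

/-- n-fold tensor (Kronecker) power of a matrix. -/
def tpow {A : Type*} (U : Matrix A A ℂ) (n : ℕ) :
    Matrix (Fin n → A) (Fin n → A) ℂ :=
  Matrix.of fun f g => ∏ m, U (f m) (g m)

/-- the type (multiplicity vector) of a sequence. -/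
def typeOf {ι : Type*} [Fintype ι] [DecidableEq ι] {n : ℕ} (x : Fin n → ι) : ι → ℕ :=
  fun k => (Finset.univ.filter fun m => x m = k).card

/-- the projector `P_μ^n = ∑_{x^n of type μ} ⊗_m P_{x_m}` onto a type class. -/
noncomputable def typeProj {A ι : Type*} [Fintype A] [Fintype ι] [DecidableEq ι]
    (P : ι → Matrix A A ℂ) (n : ℕ) (t : ι → ℕ) :
    Matrix (Fin n → A) (Fin n → A) ℂ :=
  ∑ x ∈ Finset.univ.filter (fun x : Fin n → ι => typeOf x = t),
    Matrix.of fun f g => ∏ m, P (x m) (f m) (g m)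

/-- the type pinching map `K ↦ ∑_μ P_μ^n K P_μ^n` on `n` systems. -/
noncomputable def typePinch {A ι : Type*} [Fintype A] [Fintype ι] [DecidableEq ι]
    (P : ι → Matrix A A ℂ) (n : ℕ)
    (K : Matrix (Fin n → A) (Fin n → A) ℂ) :
    Matrix (Fin n → A) (Fin n → A) ℂ :=
  ∑ t ∈ Finset.univ.image (typeOf (ι := ι) (n := n)),
    typeProj P n t * K * typeProj P n t

/-! Expanding `U = ∑ₖ e^{iφₖ} Pₖ` gives `U^{⊗n} = ∑ₓ (∏ₘ e^{iφ_{x m}}) ⊗ₘ P_{x m}`, and with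
`φₖ = 2π jₖ/(n+1)` the phase of the word `x` is `∏ₖ ζ^{jₖ μₖ}`, `ζ = e^{2πi/(n+1)}`, where `μ` is
the type of `x`. The average over `j` of the phase of `x` times the conjugate phase of `y`
factorises over `k` into `(n+1)⁻¹ ∑ⱼ ζ^{j(μₖ - νₖ)}`, which vanishes unless `μₖ = νₖ` since
`|μₖ - νₖ| ≤ n`. Only pairs of words of equal type survive, and they reassemble into
`∑_μ P_μ^n X P_μ^n`. -/

theorem IsPrimitiveRoot.geom_sum_zpow_eq_ite {K : Type*} [Field K] {ζ : K} {N : ℕ}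
    (hζ : IsPrimitiveRoot ζ N) (l : ℤ) :
    ∑ i ∈ Finset.range N, (ζ ^ l) ^ i = if (N : ℤ) ∣ l then (N : K) else 0 := by
  split_ifs with hl
  · simp [(hζ.zpow_eq_one_iff_dvd l).mpr hl]
  · have hne : 1 - ζ ^ l ≠ 0 := sub_ne_zero.mpr fun h => hl ((hζ.zpow_eq_one_iff_dvd l).mp h.symm)
    have hpow : (ζ ^ l) ^ N = 1 := by rw [← zpow_natCast, ← zpow_mul, mul_comm, zpow_mul,
      zpow_natCast, hζ.pow_eq_one, one_zpow]
    refine (mul_eq_zero.mp ?_).resolve_left hne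
    rw [mul_neg_geom_sum, hpow, sub_self]

theorem IsPrimitiveRoot.sum_pow_mul_star_pow {ζ : ℂ} {N a b : ℕ} (hζ : IsPrimitiveRoot ζ N)
    (ha : a < N) (hb : b < N) :
    ∑ t : Fin N, (ζ ^ (t : ℕ)) ^ a * star ((ζ ^ (t : ℕ)) ^ b) = if a = b then (N : ℂ) else 0 := by
  have hN : N ≠ 0 := by omega
  have hζ0 : ζ ≠ 0 := hζ.ne_zero hN
  have hterm : ∀ t : ℕ, (ζ ^ t) ^ a * star ((ζ ^ t) ^ b) = (ζ ^ ((a : ℤ) - b)) ^ t := by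
    intro t
    rw [Complex.star_def, ← Complex.inv_eq_conj (by simp [hζ.norm'_eq_one hN])]
    rw [zpow_sub₀ hζ0, zpow_natCast, zpow_natCast, div_eq_mul_inv, mul_pow, inv_pow, ← pow_mul,
      ← pow_mul, ← pow_mul, ← pow_mul, mul_comm a, mul_comm b]
  simp only [hterm, Fin.sum_univ_eq_sum_range (fun t => (ζ ^ ((a : ℤ) - b)) ^ t),
    hζ.geom_sum_zpow_eq_ite]
  congr 1
  refine propext ⟨fun h => ?_, fun h => by simp [h]⟩
  have := Int.eq_zero_of_abs_lt_dvd h (by rw [abs_lt]; omega)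
  omega

theorem prod_comp_eq_prod_pow_typeOf {M ι : Type*} [CommMonoid M] [Fintype ι] [DecidableEq ι]
    {n : ℕ} (f : ι → M) (x : Fin n → ι) :
    ∏ m, f (x m) = ∏ k, f k ^ typeOf x k := by
  rw [← Finset.prod_fiberwise Finset.univ x]
  refine Finset.prod_congr rfl fun k _ => ?_
  rw [Finset.prod_congr rfl fun m hm => by rw [(Finset.mem_filter.mp hm).2], Finset.prod_const]
  rfl

theorem typeOf_le {ι : Type*} [Fintype ι] [DecidableEq ι] {n : ℕ} (x : Fin n → ι) (k : ι) :
    typeOf x k ≤ n := by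
  simpa [typeOf] using Finset.card_filter_le Finset.univ (fun m => x m = k)

theorem sum_prod_pow_mul_star_prod_pow {ι : Type*} [Fintype ι] [DecidableEq ι] {n N : ℕ}
    {ζ : ℂ} (hζ : IsPrimitiveRoot ζ N) (hn : n < N) (x y : Fin n → ι) :
    ∑ j : ι → Fin N, (∏ m, ζ ^ (j (x m) : ℕ)) * star (∏ m, ζ ^ (j (y m) : ℕ)) =
      if typeOf x = typeOf y then (N : ℂ) ^ Fintype.card ι else 0 := by
  have hfactor : ∀ j : ι → Fin N, (∏ m, ζ ^ (j (x m) : ℕ)) * star (∏ m, ζ ^ (j (y m) : ℕ)) =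
      ∏ k, (ζ ^ (j k : ℕ)) ^ typeOf x k * star ((ζ ^ (j k : ℕ)) ^ typeOf y k) := by
    intro j
    rw [prod_comp_eq_prod_pow_typeOf (fun k => ζ ^ (j k : ℕ)) x,
      prod_comp_eq_prod_pow_typeOf (fun k => ζ ^ (j k : ℕ)) y, star_prod, Finset.prod_mul_distrib]
  simp only [hfactor]
  rw [← Fintype.prod_sum (fun k (t : Fin N) => (ζ ^ (t : ℕ)) ^ typeOf x k *
    star ((ζ ^ (t : ℕ)) ^ typeOf y k))]
  simp only [hζ.sum_pow_mul_star_pow ((typeOf_le x _).trans_lt hn)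
    ((typeOf_le y _).trans_lt hn), Finset.prod_ite_zero, Finset.mem_univ, true_imp_iff,
    Finset.prod_const, Finset.card_univ, funext_iff]

section KroneckerWords

variable {A ι : Type*} {n : ℕ}

def kronWord (P : ι → Matrix A A ℂ) (x : Fin n → ι) : Matrix (Fin n → A) (Fin n → A) ℂ :=
  Matrix.of fun f g => ∏ m, P (x m) (f m) (g m)

theorem kronWord_isHermitian {P : ι → Matrix A A ℂ} (hP : ∀ k, (P k).IsHermitian)
    (x : Fin n → ι) : (kronWord P x).IsHermitian := by
  ext f g
  simp only [Matrix.conjTranspose_apply, kronWord, Matrix.of_apply, star_prod]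
  exact Finset.prod_congr rfl fun m _ => (hP (x m)).apply (f m) (g m)

theorem tpow_sum_smul [Fintype ι] (c : ι → ℂ) (P : ι → Matrix A A ℂ) :
    tpow (∑ k, c k • P k) n = ∑ x : Fin n → ι, (∏ m, c (x m)) • kronWord P x := by
  ext f g
  simp only [tpow, kronWord, Matrix.of_apply, Matrix.sum_apply, Matrix.smul_apply, smul_eq_mul,
    Fintype.prod_sum, ← Finset.prod_mul_distrib]

variable [Fintype A] [Fintype ι]

theorem tpow_sum_smul_mul_mul_conjTranspose (c : ι → ℂ) {P : ι → Matrix A A ℂ}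
    (hP : ∀ k, (P k).IsHermitian) (X : Matrix (Fin n → A) (Fin n → A) ℂ) :
    tpow (∑ k, c k • P k) n * X * (tpow (∑ k, c k • P k) n)ᴴ =
      ∑ x : Fin n → ι, ∑ y : Fin n → ι,
        ((∏ m, c (x m)) * star (∏ m, c (y m))) • (kronWord P x * X * kronWord P y) := by
  simp only [tpow_sum_smul, Matrix.conjTranspose_sum, Matrix.conjTranspose_smul,
    (kronWord_isHermitian hP _).eq, Finset.sum_mul, Finset.mul_sum, Matrix.smul_mul,
    Matrix.mul_smul, smul_smul, mul_comm (star _)]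
  exact Finset.sum_comm

variable [DecidableEq ι]

theorem typeProj_eq_sum_kronWord (P : ι → Matrix A A ℂ) (t : ι → ℕ) :
    typeProj P n t = ∑ x ∈ Finset.univ.filter (fun x : Fin n → ι => typeOf x = t), kronWord P x :=
  rfl

theorem typePinch_eq_sum_sum_ite (P : ι → Matrix A A ℂ) (X : Matrix (Fin n → A) (Fin n → A) ℂ) :
    typePinch P n X = ∑ x : Fin n → ι, ∑ y : Fin n → ι,
      if typeOf x = typeOf y then kronWord P x * X * kronWord P y else 0 := by
  rw [← Finset.sum_fiberwise_of_maps_to (g := typeOf) fun x _ => Finset.mem_image_of_mem _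
    (Finset.mem_univ x)]
  refine Finset.sum_congr rfl fun t _ => ?_
  rw [typeProj_eq_sum_kronWord, Finset.sum_mul, Finset.sum_mul]
  refine Finset.sum_congr rfl fun x hx => ?_
  rw [Finset.mul_sum, Finset.sum_filter]
  refine Finset.sum_congr rfl fun y _ => ?_
  rw [(Finset.mem_filter.mp hx).2]
  exact if_congr eq_comm rfl rfl

end KroneckerWords

theorem phaseUnitary_two_pi_mul_div {A ι : Type*} [Fintype A] [Fintype ι]
    (P : ι → Matrix A A ℂ) {N : ℕ} (j : ι → Fin N) :
    phaseUnitary P (fun k => 2 * Real.pi * (j k : ℝ) / N) =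
      ∑ k, Complex.exp (2 * Real.pi * Complex.I / N) ^ (j k : ℕ) • P k := by
  refine Finset.sum_congr rfl fun k _ => ?_
  rw [← Complex.exp_nat_mul]
  push_cast
  ring_nf

theorem discrete_phase_average_eq_type_pinching_general
    {A : Type*} [Fintype A] (d n : ℕ)
    (P : Fin d → Matrix A A ℂ)
    (hHerm : ∀ k, (P k).IsHermitian)
    (X : Matrix (Fin n → A) (Fin n → A) ℂ) :
    (((n + 1 : ℕ) ^ d : ℂ))⁻¹ •
      ∑ j : Fin d → Fin (n + 1),
        tpow (phaseUnitary P fun k => 2 * Real.pi * (j k : ℝ) / (n + 1)) n * X *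
          (tpow (phaseUnitary P fun k => 2 * Real.pi * (j k : ℝ) / (n + 1)) n)ᴴ =
      typePinch P n X := by
  set ζ := Complex.exp (2 * Real.pi * Complex.I / (n + 1 : ℕ))
  have hζ : IsPrimitiveRoot ζ (n + 1) := Complex.isPrimitiveRoot_exp (n + 1) n.succ_ne_zero
  have hN : ((n + 1 : ℕ) : ℂ) ^ d ≠ 0 := pow_ne_zero _ (Nat.cast_ne_zero.mpr n.succ_ne_zero)
  calc _ = (((n + 1 : ℕ) : ℂ) ^ d)⁻¹ • ∑ x : Fin n → Fin d, ∑ y : Fin n → Fin d,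
        (∑ j : Fin d → Fin (n + 1), (∏ m, ζ ^ (j (x m) : ℕ)) * star (∏ m, ζ ^ (j (y m) : ℕ))) •
          (kronWord P x * X * kronWord P y) := by
        simp only [← Nat.cast_succ, phaseUnitary_two_pi_mul_div,
          tpow_sum_smul_mul_mul_conjTranspose _ hHerm, Finset.sum_smul]
        rw [Finset.sum_comm]
        exact congrArg _ (Finset.sum_congr rfl fun x _ => Finset.sum_comm)
    _ = (((n + 1 : ℕ) : ℂ) ^ d)⁻¹ • ∑ x : Fin n → Fin d, ∑ y : Fin n → Fin d,
        ((n + 1 : ℕ) : ℂ) ^ d •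
          if typeOf x = typeOf y then kronWord P x * X * kronWord P y else 0 := by
        simp only [sum_prod_pow_mul_star_prod_pow hζ n.lt_succ_self, Fintype.card_fin, ite_smul,
          zero_smul, smul_ite, smul_zero]
    _ = typePinch P n X := by
        simp only [← Finset.smul_sum, smul_smul, inv_mul_cancel₀ hN, one_smul]
        exact (typePinch_eq_sum_sum_ite P X).symm

/-- **Discrete phase averaging yields the type pinching.** For orthogonal projectors
`P_1, …, P_d` summing to the identity, averaging `(U^φ)^{⊗n} X ((U^φ)†)^{⊗n}` over the
finite group of phase vectors `φ ∈ {2πj/(n+1) : j = 0, …, n}^d` equals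
`∑_μ P_μ^n X P_μ^n`. -/
theorem discrete_phase_average_eq_type_pinching
    {A : Type*} [Fintype A] [DecidableEq A] (d n : ℕ)
    (P : Fin d → Matrix A A ℂ)
    (hHerm : ∀ k, (P k).IsHermitian)
    (horth : ∀ j k, P j * P k = if j = k then P j else 0)
    (hsum : ∑ k, P k = 1)
    (X : Matrix (Fin n → A) (Fin n → A) ℂ) :
    (((n + 1 : ℕ) ^ d : ℂ))⁻¹ •
      ∑ j : Fin d → Fin (n + 1),
        tpow (phaseUnitary P fun k => 2 * Real.pi * (j k : ℝ) / (n + 1)) n * X *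
          (tpow (phaseUnitary P fun k => 2 * Real.pi * (j k : ℝ) / (n + 1)) n)ᴴ =
      typePinch P n X :=
  discrete_phase_average_eq_type_pinching_general d n P hHerm X
end

section
/- The measured relative entropy satisfies data processing: for any density operators ρ, σ with supp(ρ) ⊆ supp(σ) and any trace-preserving positive linear map N, D_M(N(ρ)‖N(σ)) ≤ D_M(ρ‖σ), where D_M is defined via the variational formula D_M(ρ‖σ) = sup_{ω>0}[tr(ρ log ω) − log tr(σω)]. -/
/-!
Let `N†` be the adjoint of `N` for the trace pairing, `tr(N(X) ω) = tr(X N†(ω))`. As `N` is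
positive and trace preserving, `N†` is positive and unital and maps positive definite matrices to
positive definite ones. So every `ω > 0` in the supremum for `D_M(N(ρ)‖N(σ))` is matched by
`N†(ω) > 0` in the one for `D_M(ρ‖σ)`, with `tr(N(σ) ω) = tr(σ N†(ω))`, and it remains to show
`tr(N(ρ) log ω) ≤ tr(ρ log N†(ω))`. Through `log x = ∫₀^∞ ((1 + t)⁻¹ - (x + t)⁻¹) dt` this
follows from the resolvent inequalities `N†((ω + t)⁻¹) ≥ (N†(ω) + t)⁻¹`, which are Choi's
inequality for the unital positive map `N†`.

The supremum defining `D_M(ρ‖σ)` is finite because `supp ρ ⊆ supp σ` gives `ρ ≤ cσ`, and then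
Jensen's inequality bounds each of its terms by `log c`.
-/

open scoped ComplexOrder

/-- matrix logarithm of a Hermitian matrix (junk value `0` otherwise). -/
noncomputable def mlog {n : Type*} [Fintype n] [DecidableEq n]
    (A : Matrix n n ℂ) : Matrix n n ℂ :=
  if h : A.IsHermitian then h.cfc Real.log else 0

/-- measured relative entropy, via the variational formula
`D_M(ρ‖σ) = sup_{ω > 0} [tr(ρ log ω) − log tr(σω)]`. -/
noncomputable def DMvar {n : Type*} [Fintype n] [DecidableEq n]
    (ρ σ : Matrix n n ℂ) : ℝ :=
  ⨆ ω : {ω : Matrix n n ℂ // ω.PosDef},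
    ((ρ * mlog ω.1).trace).re - Real.log ((σ * ω.1).trace).re

open Finset Matrix

section Scalar

open MeasureTheory Set Filter Topology

lemma Real.integrableOn_and_integral_inv_one_add_sub_inv_add {x : ℝ} (hx : 0 < x) :
    IntegrableOn (fun t : ℝ => (1 + t)⁻¹ - (x + t)⁻¹) (Ioi 0) ∧
      ∫ t in Ioi (0 : ℝ), ((1 + t)⁻¹ - (x + t)⁻¹) = Real.log x := by
  set F : ℝ → ℝ := fun t => Real.log (1 + t) - Real.log (x + t)
  have hderiv : ∀ t ∈ Ici (0 : ℝ), HasDerivAt F ((1 + t)⁻¹ - (x + t)⁻¹) t := fun t ht => by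
    have ht : (0 : ℝ) ≤ t := ht
    exact (((hasDerivAt_id t).const_add 1).log (by positivity)).sub
      (((hasDerivAt_id t).const_add x).log (by positivity)) |>.congr_deriv (by simp)
  have hlim : Tendsto F atTop (𝓝 0) := by
    have hquot : Tendsto (fun t : ℝ => 1 + (1 - x) / (x + t)) atTop (𝓝 1) := by
      simpa using tendsto_const_nhds.add
        (tendsto_const_nhds.div_atTop (tendsto_atTop_add_const_left _ x tendsto_id))
    refine (Real.log_one ▸ (Real.continuousAt_log one_ne_zero).tendsto.comp hquot).congr' ?_
    filter_upwards [eventually_gt_atTop 0] with t ht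
    simp only [F, Function.comp_apply]
    rw [← Real.log_div (by positivity) (by positivity)]
    congr 1
    field_simp
    ring
  have hF0 : F 0 = -Real.log x := by simp [F]
  rcases le_total 1 x with hx1 | hx1
  · have hnonneg : ∀ t ∈ Ioi (0 : ℝ), 0 ≤ (1 + t)⁻¹ - (x + t)⁻¹ := fun t (ht : 0 < t) =>
      sub_nonneg.mpr (inv_anti₀ (by positivity) (by linarith))
    refine ⟨integrableOn_Ioi_deriv_of_nonneg' hderiv hnonneg hlim, ?_⟩
    rw [integral_Ioi_of_hasDerivAt_of_nonneg' hderiv hnonneg hlim, hF0]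
    ring
  · have hnonpos : ∀ t ∈ Ioi (0 : ℝ), (1 + t)⁻¹ - (x + t)⁻¹ ≤ 0 := fun t (ht : 0 < t) =>
      sub_nonpos.mpr (inv_anti₀ (by positivity) (by linarith))
    refine ⟨integrableOn_Ioi_deriv_of_nonpos' hderiv hnonpos hlim, ?_⟩
    rw [integral_Ioi_of_hasDerivAt_of_nonpos' hderiv hnonpos hlim, hF0]
    ring

lemma sum_mul_log_eq_integral {ι : Type*} [Fintype ι] {x : ι → ℝ} (hx : ∀ k, 0 < x k)
    (w : ι → ℝ) :
    ∑ k, w k * Real.log (x k) = ∫ t in Ioi (0 : ℝ), ∑ k, w k * ((1 + t)⁻¹ - (x k + t)⁻¹) := by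
  rw [integral_finsetSum _ fun k _ =>
    (Real.integrableOn_and_integral_inv_one_add_sub_inv_add (hx k)).1.const_mul (w k)]
  exact sum_congr rfl fun k _ => by
    rw [integral_const_mul, (Real.integrableOn_and_integral_inv_one_add_sub_inv_add (hx k)).2]

lemma integrableOn_sum_mul_inv_one_add_sub_inv_add {ι : Type*} [Fintype ι] {x : ι → ℝ}
    (hx : ∀ k, 0 < x k) (w : ι → ℝ) :
    IntegrableOn (fun t : ℝ => ∑ k, w k * ((1 + t)⁻¹ - (x k + t)⁻¹)) (Ioi 0) :=
  integrable_finsetSum _ fun k _ =>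
    (Real.integrableOn_and_integral_inv_one_add_sub_inv_add (hx k)).1.const_mul (w k)

lemma sum_mul_log_le_of_sum_mul_inv_add_le {ι κ : Type*} [Fintype ι] [Fintype κ]
    {lam : ι → ℝ} {mu : κ → ℝ} (hlam : ∀ k, 0 < lam k) (hmu : ∀ j, 0 < mu j)
    {a : ι → ℝ} {r : κ → ℝ} (hsum : ∑ k, a k = ∑ j, r j)
    (hres : ∀ t : ℝ, 0 < t → ∑ j, r j * (mu j + t)⁻¹ ≤ ∑ k, a k * (lam k + t)⁻¹) :
    ∑ k, a k * Real.log (lam k) ≤ ∑ j, r j * Real.log (mu j) := by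
  rw [sum_mul_log_eq_integral hlam, sum_mul_log_eq_integral hmu]
  refine setIntegral_mono_on (integrableOn_sum_mul_inv_one_add_sub_inv_add hlam a)
    (integrableOn_sum_mul_inv_one_add_sub_inv_add hmu r) measurableSet_Ioi fun t ht => ?_
  simp only [mul_sub, sum_sub_distrib, ← sum_mul, hsum]
  linarith [hres t ht]

end Scalar

section Trace

variable {n : Type*} [Fintype n]

lemma Matrix.trace_mul_vecMulVec_star (X : Matrix n n ℂ) (v : n → ℂ) :
    (X * vecMulVec v (star v)).trace = star v ⬝ᵥ (X *ᵥ v) := by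
  rw [mul_vecMulVec, trace_vecMulVec, dotProduct_comm]

lemma Matrix.PosSemidef.trace_mul_nonneg {X Y : Matrix n n ℂ} (hX : X.PosSemidef)
    (hY : Y.PosSemidef) : 0 ≤ (X * Y).trace := by
  obtain ⟨m, v, rfl⟩ := posSemidef_iff_eq_sum_vecMulVec.mp hY
  simp only [Matrix.mul_sum, trace_sum, trace_mul_vecMulVec_star]
  exact sum_nonneg fun i _ => hX.dotProduct_mulVec_nonneg (v i)

lemma Matrix.PosDef.trace_mul_pos {X Y : Matrix n n ℂ} (hX : X.PosDef)
    (hY : Y.PosSemidef) (hY0 : Y ≠ 0) : 0 < (X * Y).trace := by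
  obtain ⟨m, v, rfl⟩ := posSemidef_iff_eq_sum_vecMulVec.mp hY
  obtain ⟨i, hi⟩ : ∃ i, v i ≠ 0 := by
    by_contra! h
    simp [h] at hY0
  simp only [Matrix.mul_sum, trace_sum, trace_mul_vecMulVec_star]
  exact sum_pos' (fun i _ => hX.posSemidef.dotProduct_mulVec_nonneg (v i))
    ⟨i, mem_univ i, hX.dotProduct_mulVec_pos hi⟩

lemma Matrix.posSemidef_of_forall_dotProduct_mulVec_nonneg {A : Matrix n n ℂ}
    (hA : ∀ x : n → ℂ, 0 ≤ star x ⬝ᵥ (A *ᵥ x)) : A.PosSemidef := by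
  classical
  rw [← isPositive_toEuclideanLin_iff, LinearMap.isPositive_iff_complex]
  intro x
  have h : inner ℂ (A.toEuclideanLin x) x = star (star x.ofLp ⬝ᵥ A *ᵥ x.ofLp) := by
    rw [EuclideanSpace.inner_eq_star_dotProduct, star_dotProduct, star_star, dotProduct_comm]
    rfl
  rw [h]
  obtain ⟨hre, him⟩ := Complex.nonneg_iff.mp (hA x)
  exact ⟨Complex.ext (by simp) (by simp [← him]), by simpa using hre⟩

end Trace

namespace Matrix.IsHermitian

variable {n : Type*} [Fintype n] [DecidableEq n] {H : Matrix n n ℂ} (hH : H.IsHermitian)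

noncomputable def eigenProj (k : n) : Matrix n n ℂ :=
  vecMulVec ⇑(hH.eigenvectorBasis k) (star ⇑(hH.eigenvectorBasis k))

lemma eigenProj_posSemidef (k : n) : (hH.eigenProj k).PosSemidef :=
  posSemidef_vecMulVec_self_star _

lemma cfc_eq_sum_eigenProj (f : ℝ → ℝ) :
    hH.cfc f = ∑ k, (f (hH.eigenvalues k) : ℂ) • hH.eigenProj k := by
  ext i j
  simp only [IsHermitian.cfc, diagonal, Complex.coe_algebraMap, Function.comp_apply,
    Unitary.conjStarAlgAut_apply, mul_apply, eigenvectorUnitary_apply, of_apply, mul_ite, mul_zero,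
    sum_ite_eq', mem_univ, ↓reduceIte, star_apply, RCLike.star_def, eigenProj, Complex.coe_smul,
    sum_apply, smul_apply, vecMulVec_apply, Pi.star_apply, Complex.real_smul]
  exact sum_congr rfl fun k _ => by ring

lemma cfc_congr {f g : ℝ → ℝ} (hfg : ∀ k, f (hH.eigenvalues k) = g (hH.eigenvalues k)) :
    hH.cfc f = hH.cfc g := by
  simp only [cfc_eq_sum_eigenProj, hfg]

lemma cfc_mul_cfc (f g : ℝ → ℝ) : hH.cfc f * hH.cfc g = hH.cfc (f * g) := by
  simp only [IsHermitian.cfc, ← map_mul, diagonal_mul_diagonal]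
  congr 2
  ext k
  simp

lemma cfc_id_eq : hH.cfc id = H := by
  rw [← hH.cfc_eq, cfc_id ℝ H]

lemma cfc_one_eq : hH.cfc 1 = 1 := by
  rw [← hH.cfc_eq, cfc_one ℝ H]

lemma cfc_add_const (t : ℝ) : hH.cfc (fun x => x + t) = H + (t : ℂ) • 1 := by
  rw [← hH.cfc_eq, _root_.cfc_add_const t (fun x => x) H, cfc_id' ℝ H,
    Algebra.algebraMap_eq_smul_one, Complex.coe_smul]

lemma isHermitian_cfc (f : ℝ → ℝ) : (hH.cfc f).IsHermitian :=
  hH.cfc_eq f ▸ cfc_predicate f H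

lemma posSemidef_cfc {f : ℝ → ℝ} (hf : ∀ k, 0 ≤ f (hH.eigenvalues k)) :
    (hH.cfc f).PosSemidef := by
  rw [cfc_eq_sum_eigenProj]
  exact posSemidef_sum _ fun k _ =>
    (hH.eigenProj_posSemidef k).smul (Complex.zero_le_real.mpr (hf k))

lemma sum_eigenProj : ∑ k, hH.eigenProj k = 1 := by
  simpa using (hH.cfc_eq_sum_eigenProj 1).symm.trans hH.cfc_one_eq

lemma re_trace_mul_cfc (Z : Matrix n n ℂ) (f : ℝ → ℝ) :
    (Z * hH.cfc f).trace.re = ∑ k, (Z * hH.eigenProj k).trace.re * f (hH.eigenvalues k) := by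
  simp [cfc_eq_sum_eigenProj, Matrix.mul_sum, trace_sum, mul_comm]

lemma sum_re_trace_mul_eigenProj (Z : Matrix n n ℂ) :
    ∑ k, (Z * hH.eigenProj k).trace.re = Z.trace.re := by
  simpa using (hH.re_trace_mul_cfc Z 1).symm.trans (by rw [hH.cfc_one_eq, Matrix.mul_one])

end Matrix.IsHermitian

section Choi

variable {n : Type*} [Fintype n] [DecidableEq n]

/-- The difference is the sum of squares `∑ c⁻¹ (1 - cW) A (1 - cW)ᴴ`: expanding, the cross terms
give `-2W` since `∑ A = 1`, and the quadratic ones give `W (∑ c A) W = W`. -/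
lemma posSemidef_sum_inv_smul_sub {ι : Type*} [Fintype ι] {c : ι → ℝ} (hc : ∀ k, 0 < c k)
    {A : ι → Matrix n n ℂ} (hA : ∀ k, (A k).PosSemidef) (hA1 : ∑ k, A k = 1)
    {W : Matrix n n ℂ} (hW : W.IsHermitian) (hWA : W * ∑ k, (c k : ℂ) • A k = 1) :
    (∑ k, (((c k)⁻¹ : ℝ) : ℂ) • A k - W).PosSemidef := by
  have hterm : ∀ k, (((c k)⁻¹ : ℝ) : ℂ) • ((1 - (c k : ℂ) • W) * A k * (1 - (c k : ℂ) • W)ᴴ) =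
      (((c k)⁻¹ : ℝ) : ℂ) • A k - A k * W - W * A k + W * ((c k : ℂ) • A k) * W := by
    intro k
    have hck : (c k : ℂ) ≠ 0 := by exact_mod_cast (hc k).ne'
    rw [conjTranspose_sub, conjTranspose_one, conjTranspose_smul, hW.eq, Complex.star_def,
      Complex.conj_ofReal]
    simp only [sub_mul, mul_sub, Matrix.one_mul, Matrix.mul_one, Matrix.smul_mul,
      Matrix.mul_smul, smul_sub, smul_smul, Complex.ofReal_inv, inv_mul_cancel₀ hck,
      inv_mul_cancel_left₀ hck, one_smul, Matrix.mul_assoc]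
    abel
  have hsum : ∑ k, (((c k)⁻¹ : ℝ) : ℂ) • A k - W = ∑ k, (((c k)⁻¹ : ℝ) : ℂ) •
      ((1 - (c k : ℂ) • W) * A k * (1 - (c k : ℂ) • W)ᴴ) := by
    simp only [hterm, sum_add_distrib, sum_sub_distrib, ← sum_mul, ← Matrix.mul_sum, hA1,
      Matrix.one_mul, Matrix.mul_one, hWA]
    abel
  rw [hsum]
  exact posSemidef_sum _ fun k _ => ((hA k).mul_mul_conjTranspose_same _).smul
    (Complex.zero_le_real.mpr (inv_nonneg.mpr (hc k).le))

variable {m : Type*} [Fintype m] [DecidableEq m]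

/-- Choi's inequality `Φ(Y⁻¹) ≥ Φ(Y)⁻¹` for `Y = g(X)`, with `W` standing for `Φ(Y)⁻¹`. -/
lemma choi_inequality (Φ : Matrix m m ℂ →ₗ[ℂ] Matrix n n ℂ)
    (hΦ : ∀ X, X.PosSemidef → (Φ X).PosSemidef) (hΦ1 : Φ 1 = 1) {X : Matrix m m ℂ}
    (hX : X.IsHermitian) {g : ℝ → ℝ} (hg : ∀ k, 0 < g (hX.eigenvalues k))
    {W : Matrix n n ℂ} (hW : W.IsHermitian) (hWX : W * Φ (hX.cfc g) = 1) :
    (Φ (hX.cfc g⁻¹) - W).PosSemidef := by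
  have hsum : ∑ k, Φ (hX.eigenProj k) = 1 := by rw [← map_sum, hX.sum_eigenProj, hΦ1]
  simp only [hX.cfc_eq_sum_eigenProj, map_sum, map_smul, Pi.inv_apply] at hWX ⊢
  exact posSemidef_sum_inv_smul_sub hg (fun k => hΦ _ (hX.eigenProj_posSemidef k)) hsum hW hWX

end Choi

section TraceDual

variable {n m : Type*} [Fintype n] [DecidableEq n] [DecidableEq m]
  (N : Matrix m m ℂ →ₗ[ℂ] Matrix n n ℂ)

noncomputable def traceDual : Matrix n n ℂ →ₗ[ℂ] Matrix m m ℂ where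
  toFun ω := Matrix.of fun a b => (ω * N (single b a 1)).trace
  map_add' x y := by ext; simp [Matrix.add_mul]
  map_smul' c x := by ext; simp

lemma traceDual_apply (ω : Matrix n n ℂ) (a b : m) :
    traceDual N ω a b = (ω * N (single b a 1)).trace := rfl

variable [Fintype m]

lemma trace_traceDual_mul (ω : Matrix n n ℂ) (X : Matrix m m ℂ) :
    (traceDual N ω * X).trace = (ω * N X).trace := by
  have hX : X = ∑ a, ∑ b, X b a • single b a (1 : ℂ) := by
    conv_lhs => rw [matrix_eq_sum_single X]
    rw [sum_comm]
    simp [smul_single]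
  calc (traceDual N ω * X).trace = ∑ a, ∑ b, X b a * (ω * N (single b a 1)).trace := by
        simp [trace, mul_apply, traceDual_apply, mul_comm]
    _ = (ω * N X).trace := by
        conv_rhs => rw [hX]
        simp only [map_sum, map_smul, Matrix.mul_sum, Matrix.mul_smul, trace_sum, trace_smul,
          smul_eq_mul]

lemma trace_mul_traceDual (X : Matrix m m ℂ) (ω : Matrix n n ℂ) :
    (X * traceDual N ω).trace = (N X * ω).trace := by
  rw [trace_mul_comm, trace_traceDual_mul, trace_mul_comm]

lemma traceDual_one (hTP : ∀ X, (N X).trace = X.trace) : traceDual N 1 = 1 := by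
  ext a b
  rw [traceDual_apply, Matrix.one_mul, hTP, one_apply]
  rcases eq_or_ne a b with rfl | h
  · simp [trace_single_eq_same]
  · simp [trace_single_eq_of_ne, h, Ne.symm h]

lemma dotProduct_traceDual_mulVec (ω : Matrix n n ℂ) (x : m → ℂ) :
    star x ⬝ᵥ (traceDual N ω *ᵥ x) = (ω * N (vecMulVec x (star x))).trace := by
  rw [← trace_mul_vecMulVec_star, trace_traceDual_mul]

variable {N} (hN : ∀ X, X.PosSemidef → (N X).PosSemidef)
include hN

lemma traceDual_posSemidef {ω : Matrix n n ℂ} (hω : ω.PosSemidef) :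
    (traceDual N ω).PosSemidef :=
  posSemidef_of_forall_dotProduct_mulVec_nonneg fun x => by
    rw [dotProduct_traceDual_mulVec]
    exact hω.trace_mul_nonneg (hN _ (posSemidef_vecMulVec_self_star x))

lemma traceDual_posDef (hTP : ∀ X, (N X).trace = X.trace) {ω : Matrix n n ℂ}
    (hω : ω.PosDef) : (traceDual N ω).PosDef := by
  refine .of_dotProduct_mulVec_pos (traceDual_posSemidef hN hω.posSemidef).isHermitian
    fun x hx => ?_
  rw [dotProduct_traceDual_mulVec]
  refine hω.trace_mul_pos (hN _ (posSemidef_vecMulVec_self_star x)) fun h0 => hx ?_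
  have := congrArg trace h0
  rwa [hTP, trace_vecMulVec, trace_zero, dotProduct_comm, dotProduct_star_self_eq_zero] at this

end TraceDual

section MeasuredRelativeEntropy

variable {n : Type*} [Fintype n] [DecidableEq n]

lemma mlog_of_isHermitian {H : Matrix n n ℂ} (hH : H.IsHermitian) : mlog H = hH.cfc Real.log :=
  dif_pos hH

lemma Matrix.PosSemidef.one_sub_of_trace_eq_one {ρ : Matrix n n ℂ} (hρ : ρ.PosSemidef)
    (hρ1 : ρ.trace = 1) : (1 - ρ).PosSemidef := by
  have hsum : ∑ k, hρ.1.eigenvalues k = 1 := by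
    simpa using congrArg Complex.re (hρ.1.trace_eq_sum_eigenvalues.symm.trans hρ1)
  have h : 1 - ρ = hρ.1.cfc fun x => 1 - x := by
    have : IsSelfAdjoint ρ := hρ.1
    rw [← hρ.1.cfc_eq, cfc_sub (fun _ => 1) (fun x => x) ρ, cfc_const_one ℝ ρ, cfc_id' ℝ ρ]
  rw [h]
  refine hρ.1.posSemidef_cfc fun k => sub_nonneg.mpr ?_
  exact hsum ▸ single_le_sum (fun j _ => hρ.eigenvalues_nonneg j) (mem_univ k)

lemma Matrix.IsHermitian.mul_cfc_support_eq_self {ρ σ : Matrix n n ℂ} (hσ : σ.IsHermitian)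
    (hker : ∀ v, σ *ᵥ v = 0 → ρ *ᵥ v = 0) :
    ρ * hσ.cfc (fun x => if x = 0 then 0 else 1) = ρ := by
  have hρQ : ∀ j, hσ.eigenvalues j = 0 → ρ * hσ.eigenProj j = 0 := fun j hj => by
    have hσv : σ *ᵥ ⇑(hσ.eigenvectorBasis j) = 0 := by
      rw [hσ.mulVec_eigenvectorBasis, hj, zero_smul]
    simp only [IsHermitian.eigenProj, mul_vecMulVec, hker _ hσv, zero_vecMulVec]
  conv_rhs => rw [← Matrix.mul_one ρ, ← hσ.sum_eigenProj]
  rw [hσ.cfc_eq_sum_eigenProj, Matrix.mul_sum, Matrix.mul_sum]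
  refine sum_congr rfl fun j _ => ?_
  by_cases hj : hσ.eigenvalues j = 0
  · simp [hj, hρQ j hj]
  · simp [hj]

/-- With `P` the projection onto the range of `σ`, one has `ρ = PρP ≤ P ≤ cσ`. -/
lemma Matrix.PosSemidef.exists_smul_sub_posSemidef {ρ σ : Matrix n n ℂ} (hρ : ρ.PosSemidef)
    (hρ1 : (1 - ρ).PosSemidef) (hσ : σ.PosSemidef)
    (hker : ∀ v, σ *ᵥ v = 0 → ρ *ᵥ v = 0) :
    ∃ c : ℝ, 0 < c ∧ ((c : ℂ) • σ - ρ).PosSemidef := by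
  set supp : ℝ → ℝ := fun x => if x = 0 then 0 else 1
  set P := hσ.1.cfc supp
  have hP : P.IsHermitian := hσ.1.isHermitian_cfc supp
  have hρP : ρ * P = ρ := hσ.1.mul_cfc_support_eq_self hker
  have hPρ : P * ρ = ρ := by
    simpa [hP.eq, hρ.1.eq] using congrArg (·ᴴ) hρP
  have hPP : P * P = P := by
    rw [hσ.1.cfc_mul_cfc]
    congr 1
    ext x
    by_cases hx : x = 0 <;> simp [supp, hx]
  set c := 1 + ∑ j, (hσ.1.eigenvalues j)⁻¹
  have hc : 0 < c := add_pos_of_pos_of_nonneg one_pos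
    (sum_nonneg fun j _ => inv_nonneg.mpr (hσ.eigenvalues_nonneg j))
  have hsplit : (c : ℂ) • σ - ρ = hσ.1.cfc (fun x => c * x - supp x) + P * (1 - ρ) * Pᴴ := by
    rw [hP.eq, Matrix.mul_sub, Matrix.mul_one, Matrix.sub_mul, hPP, hPρ, hρP]
    conv_lhs => rw [← hσ.1.cfc_id_eq]
    simp only [P, hσ.1.cfc_eq_sum_eigenProj, Complex.ofReal_sub, Complex.ofReal_mul, sub_smul,
      mul_smul, sum_sub_distrib, smul_sum, id]
    abel
  refine ⟨c, hc, hsplit ▸ (hσ.1.posSemidef_cfc fun j => ?_).add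
    (hρ1.mul_mul_conjTranspose_same _)⟩
  by_cases hj : hσ.1.eigenvalues j = 0
  · simp [supp, hj]
  · have hc_ge : (hσ.1.eigenvalues j)⁻¹ ≤ c := by
      linarith [single_le_sum (fun k _ => inv_nonneg.mpr (hσ.eigenvalues_nonneg k)) (mem_univ j)]
    simp only [supp, if_neg hj, sub_nonneg]
    calc (1 : ℝ) = (hσ.1.eigenvalues j)⁻¹ * hσ.1.eigenvalues j := (inv_mul_cancel₀ hj).symm
      _ ≤ c * hσ.1.eigenvalues j := by gcongr; exact hσ.eigenvalues_nonneg j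

lemma re_trace_mul_mlog_le_log {ρ ω : Matrix n n ℂ} (hρ : ρ.PosSemidef) (hρ1 : ρ.trace = 1)
    (hω : ω.PosDef) : (ρ * mlog ω).trace.re ≤ Real.log (ρ * ω).trace.re := by
  have hp1 : ∑ k, (ρ * hω.1.eigenProj k).trace.re = 1 := by
    rw [hω.1.sum_re_trace_mul_eigenProj, hρ1, Complex.one_re]
  have hp : ∀ k ∈ univ, 0 ≤ (ρ * hω.1.eigenProj k).trace.re := fun k _ =>
    (Complex.nonneg_iff.mp (hρ.trace_mul_nonneg (hω.1.eigenProj_posSemidef k))).1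
  have hjensen := strictConcaveOn_log_Ioi.concaveOn.le_map_sum hp hp1
    fun k _ => hω.eigenvalues_pos k
  rw [mlog_of_isHermitian hω.1, hω.1.re_trace_mul_cfc]
  conv_rhs => rw [← hω.1.cfc_id_eq, hω.1.re_trace_mul_cfc]
  exact hjensen

lemma sub_log_le_log_of_smul_sub_posSemidef {ρ σ ω : Matrix n n ℂ} (hρ : ρ.PosSemidef)
    (hρ1 : ρ.trace = 1) {c : ℝ} (hc : 0 < c) (hcσρ : ((c : ℂ) • σ - ρ).PosSemidef)
    (hω : ω.PosDef) :
    (ρ * mlog ω).trace.re - Real.log (σ * ω).trace.re ≤ Real.log c := by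
  have hρ0 : ρ ≠ 0 := fun h => by simp [h] at hρ1
  have hρω : 0 < (ρ * ω).trace.re := by
    rw [trace_mul_comm]
    exact (Complex.pos_iff.mp (hω.trace_mul_pos hρ hρ0)).1
  have hle : (ρ * ω).trace.re ≤ c * (σ * ω).trace.re := by
    have := (Complex.nonneg_iff.mp (hcσρ.trace_mul_nonneg hω.posSemidef)).1
    simpa [Matrix.sub_mul, Matrix.smul_mul] using this
  have hσω : 0 < (σ * ω).trace.re := pos_of_mul_pos_right (hρω.trans_le hle) hc.le
  calc (ρ * mlog ω).trace.re - Real.log (σ * ω).trace.re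
      ≤ Real.log (ρ * ω).trace.re - Real.log (σ * ω).trace.re :=
        sub_le_sub_right (re_trace_mul_mlog_le_log hρ hρ1 hω) _
    _ ≤ Real.log c := by
        rw [← Real.log_div hρω.ne' hσω.ne']
        exact Real.log_le_log (div_pos hρω hσω) ((div_le_iff₀ hσω).mpr hle)

variable {m : Type*} [Fintype m] [DecidableEq m] {N : Matrix m m ℂ →ₗ[ℂ] Matrix n n ℂ}

lemma re_trace_map_mul_mlog_le (hN : ∀ X, X.PosSemidef → (N X).PosSemidef)
    (hTP : ∀ X, (N X).trace = X.trace) {ρ : Matrix m m ℂ} (hρ : ρ.PosSemidef)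
    {ω : Matrix n n ℂ} (hω : ω.PosDef) :
    (N ρ * mlog ω).trace.re ≤ (ρ * mlog (traceDual N ω)).trace.re := by
  have hM := traceDual_posDef hN hTP hω
  rw [mlog_of_isHermitian hω.1, mlog_of_isHermitian hM.1, hω.1.re_trace_mul_cfc,
    hM.1.re_trace_mul_cfc]
  refine sum_mul_log_le_of_sum_mul_inv_add_le hω.eigenvalues_pos hM.eigenvalues_pos ?_
    fun t ht => ?_
  · rw [hω.1.sum_re_trace_mul_eigenProj, hM.1.sum_re_trace_mul_eigenProj, hTP]
  have hW : hM.1.cfc (fun x => (x + t)⁻¹) * traceDual N (hω.1.cfc fun x => x + t) = 1 := by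
    rw [hω.1.cfc_add_const, map_add, map_smul, traceDual_one N hTP, ← hM.1.cfc_add_const,
      hM.1.cfc_mul_cfc, ← hM.1.cfc_one_eq]
    exact hM.1.cfc_congr fun k => inv_mul_cancel₀ (by linarith [hM.eigenvalues_pos k])
  have hchoi := choi_inequality (traceDual N) (fun _ => traceDual_posSemidef hN)
    (traceDual_one N hTP) hω.1 (g := fun x => x + t)
    (fun k => by linarith [hω.eigenvalues_pos k]) (hM.1.isHermitian_cfc _) hW
  have := (Complex.nonneg_iff.mp (hρ.trace_mul_nonneg hchoi)).1
  rw [Matrix.mul_sub, trace_sub, Complex.sub_re, sub_nonneg, trace_mul_traceDual,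
    hω.1.re_trace_mul_cfc, hM.1.re_trace_mul_cfc] at this
  exact this

end MeasuredRelativeEntropy

theorem measured_relative_entropy_DPI_general
    {A B : Type*} [Fintype A] [DecidableEq A] [Fintype B] [DecidableEq B]
    (ρ σ : Matrix A A ℂ)
    (hρ : ρ.PosSemidef) (hρtr : ρ.trace = 1)
    (hσ : σ.PosSemidef)
    (hsupp : ∀ v : A → ℂ, σ.mulVec v = 0 → ρ.mulVec v = 0)
    (N : Matrix A A ℂ →ₗ[ℂ] Matrix B B ℂ)
    (hTP : ∀ X : Matrix A A ℂ, (N X).trace = X.trace)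
    (hpos : ∀ X : Matrix A A ℂ, X.PosSemidef → (N X).PosSemidef) :
    DMvar (N ρ) (N σ) ≤ DMvar ρ σ := by
  obtain ⟨c, hc, hcσρ⟩ :=
    hρ.exists_smul_sub_posSemidef (hρ.one_sub_of_trace_eq_one hρtr) hσ hsupp
  -- A real `⨆` is the junk value `0` unless bounded; the support condition supplies the bound.
  have hbdd : BddAbove (Set.range fun ω : {ω : Matrix A A ℂ // ω.PosDef} =>
      (ρ * mlog ω.1).trace.re - Real.log (σ * ω.1).trace.re) := by
    refine ⟨Real.log c, ?_⟩
    rintro _ ⟨ω, rfl⟩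
    exact sub_log_le_log_of_smul_sub_posSemidef hρ hρtr hc hcσρ ω.2
  have : Nonempty {ω : Matrix B B ℂ // ω.PosDef} := ⟨⟨1, .one⟩⟩
  refine ciSup_le fun ω =>
    le_ciSup_of_le hbdd ⟨traceDual N ω.1, traceDual_posDef hpos hTP ω.2⟩ ?_
  rw [← trace_mul_traceDual N σ]
  exact sub_le_sub_right (re_trace_map_mul_mlog_le hpos hTP hρ ω.2) _

/-- **Data processing for the measured relative entropy.** For density operators `ρ, σ`
with `supp ρ ⊆ supp σ` and a trace-preserving positive linear map `N`,
`D_M(N(ρ)‖N(σ)) ≤ D_M(ρ‖σ)`. -/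
theorem measured_relative_entropy_DPI
    {A B : Type*} [Fintype A] [DecidableEq A] [Fintype B] [DecidableEq B]
    (ρ σ : Matrix A A ℂ)
    (hρ : ρ.PosSemidef) (hρtr : ρ.trace = 1)
    (hσ : σ.PosSemidef) (hσtr : σ.trace = 1)
    (hsupp : ∀ v : A → ℂ, σ.mulVec v = 0 → ρ.mulVec v = 0)
    (N : Matrix A A ℂ →ₗ[ℂ] Matrix B B ℂ)
    (hTP : ∀ X : Matrix A A ℂ, (N X).trace = X.trace)
    (hpos : ∀ X : Matrix A A ℂ, X.PosSemidef → (N X).PosSemidef) :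
    DMvar (N ρ) (N σ) ≤ DMvar ρ σ :=
  measured_relative_entropy_DPI_general ρ σ hρ hρtr hσ hsupp N hTP hpos
end
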